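/- Let G be a finite subgroup of GL_n(ℝ) and let H be a normal subgroup of G. Assume: (1) there exist g₁,…,g_k ∈ ℝ[X]^G such that a ring homomorphism φ_G: ℝ[X]^G → ℝ extends to a ring homomorphism ℝ[X]^H → ℝ if and only if φ_G(g₁) ≥ 0, …, φ_G(g_k) ≥ 0; and (2) there exists h ∈ ℝ[X]^H such that a ring homomorphism φ_H: ℝ[X]^H → ℝ extends to a ring homomorphism ℝ[X] → ℝ if and only if φ_H(h) ≥ 0. Then a ring homomorphism φ_G: ℝ[X]^G → ℝ extends to a ring homomorphism ℝ[X] → ℝ if and only if φ_G(R_G(h)) ≥ 0 and φ_G(g₁) ≥ 0, …, φ_G(g_k) ≥ 0. (Note that R_G(h) ∈ ℝ[X]^G since h ∈ ℝ[X]^H.) -/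
import Mathlib


open MvPolynomial

/-- The action of `σ ∈ GL_n(ℝ)` on real polynomials, `(σ · p)(x) = p(σ⁻¹ x)`,
given by substituting `X i ↦ ∑ j (σ⁻¹)_{i j} X j`. -/
noncomputable def polyAct {n : ℕ} (σ : Matrix.GeneralLinearGroup (Fin n) ℝ) :
    MvPolynomial (Fin n) ℝ →ₐ[ℝ] MvPolynomial (Fin n) ℝ :=
  aeval fun i => ∑ j, (σ⁻¹).val i j • X j

/-- The subalgebra `ℝ[X]^G` of `G`-invariant polynomials. -/
noncomputable def invariants {n : ℕ} (G : Subgroup (Matrix.GeneralLinearGroup (Fin n) ℝ)) :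
    Subalgebra ℝ (MvPolynomial (Fin n) ℝ) where
  carrier := {p | ∀ σ ∈ G, polyAct σ p = p}
  mul_mem' := fun hp hq σ hσ => by rw [map_mul, hp σ hσ, hq σ hσ]
  one_mem' := fun σ _ => map_one (polyAct σ)
  add_mem' := fun hp hq σ hσ => by rw [map_add, hp σ hσ, hq σ hσ]
  zero_mem' := fun σ _ => map_zero (polyAct σ)
  algebraMap_mem' := fun r σ _ => (polyAct σ).commutes r

/-- The Reynolds operator `R_H(p) = (1/|H|) ∑_{σ ∈ H} σ · p` of a (finite) subgroup `H`. -/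
noncomputable def reynolds {n : ℕ} (H : Subgroup (Matrix.GeneralLinearGroup (Fin n) ℝ))
    (p : MvPolynomial (Fin n) ℝ) : MvPolynomial (Fin n) ℝ :=
  (Nat.card H : ℝ)⁻¹ • ∑ᶠ σ ∈ (H : Set (Matrix.GeneralLinearGroup (Fin n) ℝ)), polyAct σ p

set_option maxHeartbeats 2000000
set_option synthInstance.maxHeartbeats 1000000

lemma polyAct_mul {n : ℕ} (σ τ : Matrix.GeneralLinearGroup (Fin n) ℝ)
    (p : MvPolynomial (Fin n) ℝ) :
    polyAct σ (polyAct τ p) = polyAct (σ * τ) p := by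
  have : (polyAct σ).comp (polyAct τ) = polyAct (σ * τ) := by
    rw [polyAct, polyAct, comp_aeval]
    congr 1
    funext i
    simp only [map_sum, map_smul, aeval_X, polyAct, Finset.smul_sum, smul_smul]
    rw [Finset.sum_comm]
    congr 1
    funext l
    rw [← Finset.sum_smul, mul_inv_rev, Units.val_mul, Matrix.mul_apply]
  exact AlgHom.congr_fun this p

lemma ringHom_algebraMap_real {A : Type*} [CommRing A] [Algebra ℝ A] (ρ : A →+* ℝ) (r : ℝ) :
    ρ (algebraMap ℝ A r) = r :=
  RingHom.congr_fun (Subsingleton.elim (ρ.comp (algebraMap ℝ A)) (RingHom.id ℝ)) r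

lemma ringHom_smul_real {A : Type*} [CommRing A] [Algebra ℝ A] (ρ : A →+* ℝ) (r : ℝ) (x : A) :
    ρ (r • x) = r * ρ x := by
  rw [Algebra.smul_def, map_mul, ringHom_algebraMap_real]

lemma reynolds_eq {n : ℕ} (G : Subgroup (Matrix.GeneralLinearGroup (Fin n) ℝ)) [Finite G]
    (p : MvPolynomial (Fin n) ℝ) :
    reynolds G p = (Nat.card G : ℝ)⁻¹ • ∑ᶠ σ : G, polyAct (σ : Matrix.GeneralLinearGroup (Fin n) ℝ) p := by
  rw [reynolds, ← finsum_set_coe_eq_finsum_mem]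
  rfl

-- key: σ ∈ G maps invariants H to invariants H when H normal in G
lemma polyAct_mem_invariants {n : ℕ} {G H : Subgroup (Matrix.GeneralLinearGroup (Fin n) ℝ)}
    (hnormal : ∀ g ∈ G, ∀ h ∈ H, g * h * g⁻¹ ∈ H)
    {σ : Matrix.GeneralLinearGroup (Fin n) ℝ} (hσ : σ ∈ G)
    {f : MvPolynomial (Fin n) ℝ} (hf : f ∈ invariants H) :
    polyAct σ f ∈ invariants H := by
  intro τ hτ
  rw [polyAct_mul]
  have hmem : σ⁻¹ * (τ * σ) ∈ H := by
    have := hnormal σ⁻¹ (inv_mem hσ) τ hτ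
    simpa [mul_assoc] using this
  calc polyAct (τ * σ) f = polyAct (σ * (σ⁻¹ * (τ * σ))) f := by group
    _ = polyAct σ (polyAct (σ⁻¹ * (τ * σ)) f) := (polyAct_mul _ _ _).symm
    _ = polyAct σ f := by rw [hf _ hmem]

noncomputable def polyActRes {n : ℕ} (H : Subgroup (Matrix.GeneralLinearGroup (Fin n) ℝ))
    (σ : Matrix.GeneralLinearGroup (Fin n) ℝ)
    (hσ : ∀ f ∈ invariants H, polyAct σ f ∈ invariants H) :
    invariants H →ₐ[ℝ] invariants H :=
  ((polyAct σ).comp (invariants H).val).codRestrict (invariants H)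
    (fun x => hσ x x.2)

/-- for a normal subgroup `H` of `G`, if inequalities `g₁,…,g_k ∈ ℝ[X]^G`
characterize extendability of homomorphisms `ℝ[X]^G → ℝ` to `ℝ[X]^H`, and an inequality
`h ∈ ℝ[X]^H` characterizes extendability of homomorphisms `ℝ[X]^H → ℝ` to `ℝ[X]`, then
`φ_G : ℝ[X]^G → ℝ` extends to `ℝ[X]` iff `φ_G(R_G(h)) ≥ 0` and `φ_G(gᵢ) ≥ 0` for all `i`. -/
theorem statement_16 {n k : ℕ}
    (G H : Subgroup (Matrix.GeneralLinearGroup (Fin n) ℝ)) [Finite G] (hHG : H ≤ G)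
    (hnormal : ∀ g ∈ G, ∀ h ∈ H, g * h * g⁻¹ ∈ H)
    (gs : Fin k → MvPolynomial (Fin n) ℝ) (hgs : ∀ i, gs i ∈ invariants G)
    (h1 : ∀ φ : invariants G →+* ℝ,
      (∃ ψ : invariants H →+* ℝ,
        ∀ (f : MvPolynomial (Fin n) ℝ) (hfG : f ∈ invariants G) (hfH : f ∈ invariants H),
          ψ ⟨f, hfH⟩ = φ ⟨f, hfG⟩) ↔
      ∀ i, 0 ≤ φ ⟨gs i, hgs i⟩)
    (h : MvPolynomial (Fin n) ℝ) (hh : h ∈ invariants H)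
    (h2 : ∀ ψ : invariants H →+* ℝ,
      (∃ χ : MvPolynomial (Fin n) ℝ →+* ℝ,
        ∀ (f : MvPolynomial (Fin n) ℝ) (hf : f ∈ invariants H), χ f = ψ ⟨f, hf⟩) ↔
      0 ≤ ψ ⟨h, hh⟩)
    (hRh : reynolds G h ∈ invariants G)
    (φ : invariants G →+* ℝ) :
    (∃ χ : MvPolynomial (Fin n) ℝ →+* ℝ,
        ∀ (f : MvPolynomial (Fin n) ℝ) (hf : f ∈ invariants G), χ f = φ ⟨f, hf⟩) ↔
      (0 ≤ φ ⟨reynolds G h, hRh⟩ ∧ ∀ i, 0 ≤ φ ⟨gs i, hgs i⟩) := by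

  haveI : Fintype G := Fintype.ofFinite _
  have hGH : ∀ {f : MvPolynomial (Fin n) ℝ}, f ∈ invariants G → f ∈ invariants H :=
    fun hf σ hσ => hf σ (hHG hσ)
  have hc : (0:ℝ) < (Nat.card G : ℝ)⁻¹ := by
    have h0 : (0:ℝ) < Nat.card G := by exact_mod_cast Nat.card_pos
    exact inv_pos.mpr h0
  constructor
  · rintro ⟨χ, hχ⟩
    refine ⟨?_, (h1 φ).mp ⟨χ.comp (invariants H).val.toRingHom,
      fun f hfG hfH => hχ f hfG⟩⟩
    rw [← hχ _ hRh]
    have hrw : χ (reynolds G h) = (Nat.card G : ℝ)⁻¹ * ∑ σ : G, χ (polyAct ↑σ h) := by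
      rw [reynolds_eq, finsum_eq_sum_of_fintype, ringHom_smul_real, map_sum]
    rw [hrw]
    refine mul_nonneg hc.le (Finset.sum_nonneg fun σ _ => ?_)
    have := (h2 (χ.comp (((polyAct (↑σ : Matrix.GeneralLinearGroup (Fin n) ℝ)).toRingHom).comp
        (invariants H).val.toRingHom))).mp
      ⟨χ.comp (polyAct (↑σ : Matrix.GeneralLinearGroup (Fin n) ℝ)).toRingHom,
        fun f hf => rfl⟩
    exact this
  · rintro ⟨hR, hg⟩
    obtain ⟨ψ, hψ⟩ := (h1 φ).mpr hg
    let F : G → invariants H :=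
      fun σ => ⟨polyAct σ.1 h, polyAct_mem_invariants hnormal σ.2 hh⟩
    have hRH : reynolds G h ∈ invariants H := hGH hRh
    have key : φ ⟨reynolds G h, hRh⟩ = (Nat.card G : ℝ)⁻¹ * ∑ σ : G, ψ (F σ) := by
      rw [← hψ _ hRh hRH]
      have heq : (⟨reynolds G h, hRH⟩ : invariants H) = (Nat.card G : ℝ)⁻¹ • ∑ σ : G, F σ := by
        apply Subtype.ext
        show reynolds G h = ((((Nat.card G : ℝ)⁻¹ • ∑ σ : G, F σ) : invariants H) : MvPolynomial (Fin n) ℝ)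
        rw [SetLike.val_smul, AddSubmonoidClass.coe_finset_sum, reynolds_eq,
          finsum_eq_sum_of_fintype]
      rw [heq, ringHom_smul_real, map_sum]
    have hsum : 0 ≤ ∑ σ : G, ψ (F σ) := by nlinarith [hR, key, hc]
    obtain ⟨σ, hσ⟩ : ∃ σ : G, 0 ≤ ψ (F σ) := by
      by_contra hcon
      push_neg at hcon
      haveI : Nonempty G := ⟨1⟩
      have hne : (Finset.univ : Finset G).Nonempty := Finset.univ_nonempty
      have : ∑ σ : G, ψ (F σ) < 0 := Finset.sum_neg (fun i _ => hcon i) hne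
      linarith
    let act : invariants H →+* invariants H :=
      (polyActRes H ↑σ (fun f hf => polyAct_mem_invariants hnormal σ.2 hf)).toRingHom
    have hψ'h : 0 ≤ (ψ.comp act) ⟨h, hh⟩ := hσ
    obtain ⟨χ, hχ⟩ := (h2 (ψ.comp act)).mpr hψ'h
    refine ⟨χ, fun f hf => ?_⟩
    have hfH := hGH hf
    rw [hχ f hfH]
    show ψ (act ⟨f, hfH⟩) = _
    have hfix : act ⟨f, hfH⟩ = ⟨f, hfH⟩ := Subtype.ext (hf ↑σ σ.2)
    rw [hfix, hψ f hf hfH]
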